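/- Let N ≥ 1 and let u : ℝ × ℝ → ℝ, U : ℝ × ℝ → ℝ^N be smooth solutions of u_t = u_{xxx} - 6u²u_x + u_x⟨U,U⟩ + 2u⟨U,U_x⟩ + ⟨U,U_{xx}⟩ + ⟨U_x,U_x⟩ and U_t = -2U_{xxx} - 6u_{xx}U - 6u_xU_x + 12uu_xU + 6u²U_x + ⟨U,U⟩U_x - 2⟨U,U_x⟩U. Define w := u_x + u² + (1/6)⟨U,U⟩ and W := U_x + 2uU. Then w_t = w_{xxx} - 6ww_x + 2⟨W,W_x⟩ and W_t = -2W_{xxx} + 6wW_x. -/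

import Mathlib

noncomputable section

/-- partial derivative in the first (space) variable -/
def pdx (f : ℝ → ℝ → ℝ) : ℝ → ℝ → ℝ := fun x t => deriv (fun y => f y t) x

/-- partial derivative in the second (time) variable -/
def pdt (f : ℝ → ℝ → ℝ) : ℝ → ℝ → ℝ := fun x t => deriv (fun s => f x s) t

/-- smoothness of a function of two real variables -/
def smooth2 (f : ℝ → ℝ → ℝ) : Prop := ContDiff ℝ (⊤ : ℕ∞) (fun p : ℝ × ℝ => f p.1 p.2)

/-- componentwise partial x-derivative of a vector-valued function -/
def pdxV {N : ℕ} (U : ℝ → ℝ → Fin N → ℝ) : ℝ → ℝ → Fin N → ℝ :=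
  fun x t i => deriv (fun y => U y t i) x

/-- componentwise partial t-derivative of a vector-valued function -/
def pdtV {N : ℕ} (U : ℝ → ℝ → Fin N → ℝ) : ℝ → ℝ → Fin N → ℝ :=
  fun x t i => deriv (fun s => U x s i) t

/-- pointwise Euclidean inner product of two vector-valued functions -/
def ip {N : ℕ} (A B : ℝ → ℝ → Fin N → ℝ) : ℝ → ℝ → ℝ :=
  fun x t => ∑ i, A x t i * B x t i

/-- componentwise smoothness of a vector-valued function of two real variables -/
def smooth2V {N : ℕ} (U : ℝ → ℝ → Fin N → ℝ) : Prop :=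
  ∀ i, ContDiff ℝ (⊤ : ℕ∞) (fun p : ℝ × ℝ => U p.1 p.2 i)

lemma slice_x {f : ℝ → ℝ → ℝ} (hf : smooth2 f) (t : ℝ) :
    ContDiff ℝ (⊤ : ℕ∞) (fun y => f y t) := hf.comp (contDiff_id.prodMk contDiff_const)

lemma slice_t {f : ℝ → ℝ → ℝ} (hf : smooth2 f) (x : ℝ) :
    ContDiff ℝ (⊤ : ℕ∞) (fun s => f x s) := hf.comp (contDiff_const.prodMk contDiff_id)

lemma hasDerivAt_pdx {f : ℝ → ℝ → ℝ} (hf : smooth2 f) (x t : ℝ) :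
    HasDerivAt (fun y => f y t) (pdx f x t) x :=
  ((slice_x hf t).differentiable (by simp) x).hasDerivAt

lemma hasDerivAt_pdt {f : ℝ → ℝ → ℝ} (hf : smooth2 f) (x t : ℝ) :
    HasDerivAt (fun s => f x s) (pdt f x t) t :=
  ((slice_t hf x).differentiable (by simp) t).hasDerivAt

lemma pdx_fderiv {f : ℝ → ℝ → ℝ} (hf : smooth2 f) (x t : ℝ) :
    pdx f x t = fderiv ℝ (fun p : ℝ × ℝ => f p.1 p.2) (x, t) (1, 0) := by
  have h1 : HasFDerivAt (fun p : ℝ × ℝ => f p.1 p.2)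
      (fderiv ℝ (fun p : ℝ × ℝ => f p.1 p.2) (x, t)) (x, t) :=
    (hf.differentiable (by simp) (x, t)).hasFDerivAt
  have h2 : HasDerivAt (fun y : ℝ => ((y, t) : ℝ × ℝ)) ((1 : ℝ), (0 : ℝ)) x :=
    (hasDerivAt_id x).prodMk (hasDerivAt_const x t)
  exact (h1.comp_hasDerivAt x h2).deriv

lemma smooth2_pdx {f : ℝ → ℝ → ℝ} (hf : smooth2 f) : smooth2 (pdx f) := by
  have h : ContDiff ℝ (⊤ : ℕ∞)
      (fun p : ℝ × ℝ => fderiv ℝ (fun q : ℝ × ℝ => f q.1 q.2) p ((1 : ℝ), (0 : ℝ))) :=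
    (ContinuousLinearMap.apply ℝ ℝ ((1 : ℝ), (0 : ℝ))).contDiff.comp (hf.fderiv_right (by simp))
  have e : (fun p : ℝ × ℝ => pdx f p.1 p.2)
      = fun p : ℝ × ℝ => fderiv ℝ (fun q : ℝ × ℝ => f q.1 q.2) p ((1 : ℝ), (0 : ℝ)) :=
    funext fun p => pdx_fderiv hf p.1 p.2
  rw [smooth2, e]; exact h

lemma pdt_pdx_comm {f : ℝ → ℝ → ℝ} (hf : smooth2 f) (x t : ℝ) :
    pdt (pdx f) x t = pdx (pdt f) x t := by
  set F := fun p : ℝ × ℝ => f p.1 p.2 with hF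
  have hdiff : ∀ p, HasFDerivAt F (fderiv ℝ F p) p :=
    fun p => (hf.differentiable (by simp) p).hasFDerivAt
  have hF' : ContDiff ℝ (⊤ : ℕ∞) (fderiv ℝ F) := hf.fderiv_right (by simp)
  have h2 : HasFDerivAt (fderiv ℝ F) (fderiv ℝ (fderiv ℝ F) (x, t)) (x, t) :=
    (hF'.differentiable (by simp) (x, t)).hasFDerivAt
  have hsymm := second_derivative_symmetric hdiff h2 ((1 : ℝ), (0 : ℝ)) ((0 : ℝ), (1 : ℝ))
  have hcurve_t : HasDerivAt (fun s : ℝ => ((x, s) : ℝ × ℝ)) ((0 : ℝ), (1 : ℝ)) t :=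
    (hasDerivAt_const t x).prodMk (hasDerivAt_id t)
  have hcurve_x : HasDerivAt (fun y : ℝ => ((y, t) : ℝ × ℝ)) ((1 : ℝ), (0 : ℝ)) x :=
    (hasDerivAt_id x).prodMk (hasDerivAt_const x t)
  have hA : HasDerivAt (fun s : ℝ => fderiv ℝ F (x, s))
      (fderiv ℝ (fderiv ℝ F) (x, t) ((0 : ℝ), (1 : ℝ))) t := h2.comp_hasDerivAt t hcurve_t
  have hA2 : HasDerivAt (fun s : ℝ => fderiv ℝ F (x, s) ((1 : ℝ), (0 : ℝ)))
      (fderiv ℝ (fderiv ℝ F) (x, t) ((0 : ℝ), (1 : ℝ)) ((1 : ℝ), (0 : ℝ))) t :=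
    ((ContinuousLinearMap.apply ℝ ℝ ((1 : ℝ), (0 : ℝ))).hasFDerivAt).comp_hasDerivAt t hA
  have hB : HasDerivAt (fun y : ℝ => fderiv ℝ F (y, t))
      (fderiv ℝ (fderiv ℝ F) (x, t) ((1 : ℝ), (0 : ℝ))) x := h2.comp_hasDerivAt x hcurve_x
  have hB2 : HasDerivAt (fun y : ℝ => fderiv ℝ F (y, t) ((0 : ℝ), (1 : ℝ)))
      (fderiv ℝ (fderiv ℝ F) (x, t) ((1 : ℝ), (0 : ℝ)) ((0 : ℝ), (1 : ℝ))) x :=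
    ((ContinuousLinearMap.apply ℝ ℝ ((0 : ℝ), (1 : ℝ))).hasFDerivAt).comp_hasDerivAt x hB
  have e1 : pdt (pdx f) x t
      = fderiv ℝ (fderiv ℝ F) (x, t) ((0 : ℝ), (1 : ℝ)) ((1 : ℝ), (0 : ℝ)) := by
    have e : (fun s => pdx f x s) = fun s => fderiv ℝ F (x, s) ((1 : ℝ), (0 : ℝ)) :=
      funext fun s => pdx_fderiv hf x s
    rw [pdt, e]; exact hA2.deriv
  have e2 : pdx (pdt f) x t
      = fderiv ℝ (fderiv ℝ F) (x, t) ((1 : ℝ), (0 : ℝ)) ((0 : ℝ), (1 : ℝ)) := by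
    have hptf : ∀ y s, pdt f y s = fderiv ℝ F (y, s) ((0 : ℝ), (1 : ℝ)) := by
      intro y s
      have hc : HasDerivAt (fun r : ℝ => ((y, r) : ℝ × ℝ)) ((0 : ℝ), (1 : ℝ)) s :=
        (hasDerivAt_const s y).prodMk (hasDerivAt_id s)
      exact ((hdiff (y, s)).comp_hasDerivAt s hc).deriv
    have e : (fun y => pdt f y t) = fun y => fderiv ℝ F (y, t) ((0 : ℝ), (1 : ℝ)) :=
      funext fun y => hptf y t
    rw [pdx, e]; exact hB2.deriv
  rw [e1, e2, hsymm]

lemma ip_comm {N : ℕ} (A B : ℝ → ℝ → Fin N → ℝ) : ip A B = ip B A := by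
  funext x t
  exact Finset.sum_congr rfl fun i _ => mul_comm _ _

lemma hasDerivAt_pdxV {N : ℕ} {A : ℝ → ℝ → Fin N → ℝ}
    (hA : ∀ i, smooth2 (fun x t => A x t i)) (x t : ℝ) (i : Fin N) :
    HasDerivAt (fun y => A y t i) (pdxV A x t i) x := hasDerivAt_pdx (hA i) x t

lemma hasDerivAt_pdtV {N : ℕ} {A : ℝ → ℝ → Fin N → ℝ}
    (hA : ∀ i, smooth2 (fun x t => A x t i)) (x t : ℝ) (i : Fin N) :
    HasDerivAt (fun s => A x s i) (pdtV A x t i) t := hasDerivAt_pdt (hA i) x t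

lemma clairautV {N : ℕ} {A : ℝ → ℝ → Fin N → ℝ}
    (hA : ∀ i, smooth2 (fun x t => A x t i)) (x t : ℝ) (i : Fin N) :
    pdtV (pdxV A) x t i = pdx (fun a b => pdtV A a b i) x t :=
  pdt_pdx_comm (hA i) x t

lemma hasDerivAt_ip_x {N : ℕ} {A B : ℝ → ℝ → Fin N → ℝ}
    (hA : ∀ i, smooth2 (fun x t => A x t i)) (hB : ∀ i, smooth2 (fun x t => B x t i))
    (x t : ℝ) :
    HasDerivAt (fun y => ip A B y t) (ip (pdxV A) B x t + ip A (pdxV B) x t) x := by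
  have h := HasDerivAt.fun_sum (fun i (_ : i ∈ Finset.univ) =>
    (hasDerivAt_pdxV hA x t i).mul (hasDerivAt_pdxV hB x t i))
  simpa [ip, Finset.sum_add_distrib] using h

lemma hasDerivAt_ip_t {N : ℕ} {A B : ℝ → ℝ → Fin N → ℝ}
    (hA : ∀ i, smooth2 (fun x t => A x t i)) (hB : ∀ i, smooth2 (fun x t => B x t i))
    (x t : ℝ) :
    HasDerivAt (fun s => ip A B x s) (ip (pdtV A) B x t + ip A (pdtV B) x t) t := by
  have h := HasDerivAt.fun_sum (fun i (_ : i ∈ Finset.univ) =>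
    (hasDerivAt_pdtV hA x t i).mul (hasDerivAt_pdtV hB x t i))
  simpa [ip, Finset.sum_add_distrib] using h

/-- the Miura-type transformation maps system (4.38) to the
    multi-component Hirota–Satsuma system. -/
theorem stmt_10 {N : ℕ} (hN : 1 ≤ N) (u : ℝ → ℝ → ℝ) (U : ℝ → ℝ → Fin N → ℝ)
    (hu : smooth2 u) (hU : smooth2V U)
    (heq1 : ∀ x t, pdt u x t = pdx (pdx (pdx u)) x t
      - 6 * (u x t) ^ 2 * pdx u x t + pdx u x t * ip U U x t
      + 2 * u x t * ip U (pdxV U) x t + ip U (pdxV (pdxV U)) x t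
      + ip (pdxV U) (pdxV U) x t)
    (heq2 : ∀ x t i, pdtV U x t i = -2 * pdxV (pdxV (pdxV U)) x t i
      - 6 * pdx (pdx u) x t * U x t i - 6 * pdx u x t * pdxV U x t i
      + 12 * u x t * pdx u x t * U x t i + 6 * (u x t) ^ 2 * pdxV U x t i
      + ip U U x t * pdxV U x t i - 2 * ip U (pdxV U) x t * U x t i)
    (w : ℝ → ℝ → ℝ) (W : ℝ → ℝ → Fin N → ℝ)
    (hw : ∀ x t, w x t = pdx u x t + (u x t) ^ 2 + (1/6) * ip U U x t)
    (hW : ∀ x t i, W x t i = pdxV U x t i + 2 * u x t * U x t i) :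
    (∀ x t, pdt w x t = pdx (pdx (pdx w)) x t
      - 6 * w x t * pdx w x t + 2 * ip W (pdxV W) x t) ∧
    (∀ x t i, pdtV W x t i = -2 * pdxV (pdxV (pdxV W)) x t i
      + 6 * w x t * pdxV W x t i) := by
  -- smoothness of iterated derivatives
  have hu1 : smooth2 (pdx u) := smooth2_pdx hu
  have hu2 : smooth2 (pdx (pdx u)) := smooth2_pdx hu1
  have hu3 : smooth2 (pdx (pdx (pdx u))) := smooth2_pdx hu2
  have hU0 : ∀ i, smooth2 (fun x t => U x t i) := hU
  have hU1 : ∀ i, smooth2 (fun x t => pdxV U x t i) := fun i => smooth2_pdx (hU0 i)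
  have hU2 : ∀ i, smooth2 (fun x t => pdxV (pdxV U) x t i) := fun i => smooth2_pdx (hU1 i)
  have hU3 : ∀ i, smooth2 (fun x t => pdxV (pdxV (pdxV U)) x t i) :=
    fun i => smooth2_pdx (hU2 i)
  -- squares
  have hsq_x : ∀ x t, HasDerivAt (fun y => u y t ^ 2) (2 * u x t * pdx u x t) x := by
    intro x t; exact ((hasDerivAt_pdx hu x t).pow 2).congr_deriv (by norm_num)
  have hsq1_x : ∀ x t, HasDerivAt (fun y => pdx u y t ^ 2)
      (2 * pdx u x t * pdx (pdx u) x t) x := by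
    intro x t; exact ((hasDerivAt_pdx hu1 x t).pow 2).congr_deriv (by norm_num)
  have hsq_t : ∀ x t, HasDerivAt (fun s => u x s ^ 2) (2 * u x t * pdt u x t) t := by
    intro x t; exact ((hasDerivAt_pdt hu x t).pow 2).congr_deriv (by norm_num)
  -- first x-derivative of w
  have hw1 : ∀ x t, pdx w x t = pdx (pdx u) x t + 2 * u x t * pdx u x t
      + (1/3) * ip U (pdxV U) x t := by
    intro x t
    have hfun : (fun y => w y t)
        = fun y => pdx u y t + (u y t) ^ 2 + (1/6) * ip U U y t :=
      funext fun y => hw y t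
    have H := ((hasDerivAt_pdx hu1 x t).add (hsq_x x t)).add
      (HasDerivAt.const_mul ((1:ℝ)/6) (hasDerivAt_ip_x hU0 hU0 x t))
    show deriv (fun y => w y t) x = _
    rw [hfun]
    refine H.deriv.trans ?_
    rw [ip_comm (pdxV U) U]; ring
  -- second x-derivative of w
  have hw2 : ∀ x t, pdx (pdx w) x t = pdx (pdx (pdx u)) x t
      + 2 * pdx u x t ^ 2 + 2 * u x t * pdx (pdx u) x t
      + (1/3) * ip (pdxV U) (pdxV U) x t + (1/3) * ip U (pdxV (pdxV U)) x t := by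
    intro x t
    have hfun : (fun y => pdx w y t)
        = fun y => pdx (pdx u) y t + 2 * u y t * pdx u y t + (1/3) * ip U (pdxV U) y t :=
      funext fun y => hw1 y t
    have H := ((hasDerivAt_pdx hu2 x t).add
      ((HasDerivAt.const_mul (2:ℝ) (hasDerivAt_pdx hu x t)).mul (hasDerivAt_pdx hu1 x t))).add
      (HasDerivAt.const_mul ((1:ℝ)/3) (hasDerivAt_ip_x hU0 hU1 x t))
    show deriv (fun y => pdx w y t) x = _
    rw [hfun]
    refine H.deriv.trans ?_
    ring
  -- third x-derivative of w
  have hw3 : ∀ x t, pdx (pdx (pdx w)) x t = pdx (pdx (pdx (pdx u))) x t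
      + 6 * pdx u x t * pdx (pdx u) x t + 2 * u x t * pdx (pdx (pdx u)) x t
      + ip (pdxV U) (pdxV (pdxV U)) x t + (1/3) * ip U (pdxV (pdxV (pdxV U))) x t := by
    intro x t
    have hfun : (fun y => pdx (pdx w) y t)
        = fun y => pdx (pdx (pdx u)) y t + 2 * pdx u y t ^ 2 + 2 * u y t * pdx (pdx u) y t
          + (1/3) * ip (pdxV U) (pdxV U) y t + (1/3) * ip U (pdxV (pdxV U)) y t :=
      funext fun y => hw2 y t
    have H := (((( hasDerivAt_pdx hu3 x t).add
      (HasDerivAt.const_mul (2:ℝ) (hsq1_x x t))).add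
      ((HasDerivAt.const_mul (2:ℝ) (hasDerivAt_pdx hu x t)).mul (hasDerivAt_pdx hu2 x t))).add
      (HasDerivAt.const_mul ((1:ℝ)/3) (hasDerivAt_ip_x hU1 hU1 x t))).add
      (HasDerivAt.const_mul ((1:ℝ)/3) (hasDerivAt_ip_x hU0 hU2 x t))
    show deriv (fun y => pdx (pdx w) y t) x = _
    rw [hfun]
    refine H.deriv.trans ?_
    rw [ip_comm (pdxV (pdxV U)) (pdxV U)]; ring
  -- x-derivative of the u-evolution equation
  have hutx : ∀ x t, pdx (pdt u) x t = pdx (pdx (pdx (pdx u))) x t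
      - 12 * u x t * pdx u x t ^ 2 - 6 * u x t ^ 2 * pdx (pdx u) x t
      + pdx (pdx u) x t * ip U U x t + 4 * pdx u x t * ip U (pdxV U) x t
      + 2 * u x t * ip (pdxV U) (pdxV U) x t + 2 * u x t * ip U (pdxV (pdxV U)) x t
      + 3 * ip (pdxV U) (pdxV (pdxV U)) x t + ip U (pdxV (pdxV (pdxV U))) x t := by
    intro x t
    have hfun : (fun y => pdt u y t)
        = fun y => pdx (pdx (pdx u)) y t
          - 6 * (u y t) ^ 2 * pdx u y t + pdx u y t * ip U U y t
          + 2 * u y t * ip U (pdxV U) y t + ip U (pdxV (pdxV U)) y t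
          + ip (pdxV U) (pdxV U) y t :=
      funext fun y => heq1 y t
    have H := (((((hasDerivAt_pdx hu3 x t).sub
      ((HasDerivAt.const_mul (6:ℝ) (hsq_x x t)).mul (hasDerivAt_pdx hu1 x t))).add
      ((hasDerivAt_pdx hu1 x t).mul (hasDerivAt_ip_x hU0 hU0 x t))).add
      ((HasDerivAt.const_mul (2:ℝ) (hasDerivAt_pdx hu x t)).mul
        (hasDerivAt_ip_x hU0 hU1 x t))).add
      (hasDerivAt_ip_x hU0 hU2 x t)).add
      (hasDerivAt_ip_x hU1 hU1 x t)
    show deriv (fun y => pdt u y t) x = _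
    rw [hfun]
    refine H.deriv.trans ?_
    rw [ip_comm (pdxV U) U, ip_comm (pdxV (pdxV U)) (pdxV U)]; ring
  -- ⟨U, U_t⟩ via heq2
  have hipUt : ∀ x t, ip U (pdtV U) x t
      = -2 * ip U (pdxV (pdxV (pdxV U))) x t - 6 * pdx (pdx u) x t * ip U U x t
      - 6 * pdx u x t * ip U (pdxV U) x t + 12 * u x t * pdx u x t * ip U U x t
      + 6 * u x t ^ 2 * ip U (pdxV U) x t - ip U U x t * ip U (pdxV U) x t := by
    intro x t
    have key : ∀ i : Fin N, U x t i * pdtV U x t i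
        = -2 * (U x t i * pdxV (pdxV (pdxV U)) x t i)
        + (-6 * pdx (pdx u) x t + 12 * u x t * pdx u x t
            - 2 * ip U (pdxV U) x t) * (U x t i * U x t i)
        + (-6 * pdx u x t + 6 * u x t ^ 2 + ip U U x t) * (U x t i * pdxV U x t i) := by
      intro i; rw [heq2 x t i]; ring
    calc ip U (pdtV U) x t = ∑ i, U x t i * pdtV U x t i := rfl
      _ = ∑ i, (-2 * (U x t i * pdxV (pdxV (pdxV U)) x t i)
          + (-6 * pdx (pdx u) x t + 12 * u x t * pdx u x t
              - 2 * ip U (pdxV U) x t) * (U x t i * U x t i)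
          + (-6 * pdx u x t + 6 * u x t ^ 2 + ip U U x t) * (U x t i * pdxV U x t i)) :=
        Finset.sum_congr rfl fun i _ => key i
      _ = -2 * ip U (pdxV (pdxV (pdxV U))) x t - 6 * pdx (pdx u) x t * ip U U x t
          - 6 * pdx u x t * ip U (pdxV U) x t + 12 * u x t * pdx u x t * ip U U x t
          + 6 * u x t ^ 2 * ip U (pdxV U) x t - ip U U x t * ip U (pdxV U) x t := by
        simp only [ip, Finset.sum_add_distrib, ← Finset.mul_sum]; ring
  -- time derivative of w
  have hwt : ∀ x t, pdt w x t = pdx (pdx (pdx (pdx u))) x t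
      - 12 * u x t * pdx u x t ^ 2 - 6 * u x t ^ 2 * pdx (pdx u) x t
      + 2 * u x t * pdx (pdx (pdx u)) x t - 12 * u x t ^ 3 * pdx u x t
      + (6 * u x t * pdx u x t - pdx (pdx u) x t) * ip U U x t
      + (2 * pdx u x t + 6 * u x t ^ 2) * ip U (pdxV U) x t
      + 4 * u x t * ip (pdxV U) (pdxV U) x t + 4 * u x t * ip U (pdxV (pdxV U)) x t
      + 3 * ip (pdxV U) (pdxV (pdxV U)) x t + (1/3) * ip U (pdxV (pdxV (pdxV U))) x t
      - (1/3) * ip U U x t * ip U (pdxV U) x t := by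
    intro x t
    have hfun : (fun s => w x s)
        = fun s => pdx u x s + (u x s) ^ 2 + (1/6) * ip U U x s :=
      funext fun s => hw x s
    have H := ((hasDerivAt_pdt hu1 x t).add (hsq_t x t)).add
      (HasDerivAt.const_mul ((1:ℝ)/6) (hasDerivAt_ip_t hU0 hU0 x t))
    show deriv (fun s => w x s) t = _
    rw [hfun]
    refine H.deriv.trans ?_
    rw [pdt_pdx_comm hu x t, hutx x t, heq1 x t, ip_comm (pdtV U) U, hipUt x t]; ring
  -- x-derivatives of W
  have hW1 : ∀ x t i, pdxV W x t i = pdxV (pdxV U) x t i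
      + 2 * pdx u x t * U x t i + 2 * u x t * pdxV U x t i := by
    intro x t i
    have hfun : (fun y => W y t i) = fun y => pdxV U y t i + 2 * u y t * U y t i :=
      funext fun y => hW y t i
    have H := (hasDerivAt_pdxV hU1 x t i).add
      ((HasDerivAt.const_mul (2:ℝ) (hasDerivAt_pdx hu x t)).mul (hasDerivAt_pdxV hU0 x t i))
    show deriv (fun y => W y t i) x = _
    rw [hfun]
    refine H.deriv.trans ?_
    ring
  have hW2 : ∀ x t i, pdxV (pdxV W) x t i = pdxV (pdxV (pdxV U)) x t i
      + 2 * pdx (pdx u) x t * U x t i + 4 * pdx u x t * pdxV U x t i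
      + 2 * u x t * pdxV (pdxV U) x t i := by
    intro x t i
    have hfun : (fun y => pdxV W y t i)
        = fun y => pdxV (pdxV U) y t i + 2 * pdx u y t * U y t i
          + 2 * u y t * pdxV U y t i :=
      funext fun y => hW1 y t i
    have H := ((hasDerivAt_pdxV hU2 x t i).add
      ((HasDerivAt.const_mul (2:ℝ) (hasDerivAt_pdx hu1 x t)).mul
        (hasDerivAt_pdxV hU0 x t i))).add
      ((HasDerivAt.const_mul (2:ℝ) (hasDerivAt_pdx hu x t)).mul (hasDerivAt_pdxV hU1 x t i))
    show deriv (fun y => pdxV W y t i) x = _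
    rw [hfun]
    refine H.deriv.trans ?_
    ring
  have hW3 : ∀ x t i, pdxV (pdxV (pdxV W)) x t i = pdxV (pdxV (pdxV (pdxV U))) x t i
      + 2 * pdx (pdx (pdx u)) x t * U x t i + 6 * pdx (pdx u) x t * pdxV U x t i
      + 6 * pdx u x t * pdxV (pdxV U) x t i + 2 * u x t * pdxV (pdxV (pdxV U)) x t i := by
    intro x t i
    have hfun : (fun y => pdxV (pdxV W) y t i)
        = fun y => pdxV (pdxV (pdxV U)) y t i + 2 * pdx (pdx u) y t * U y t i
          + 4 * pdx u y t * pdxV U y t i + 2 * u y t * pdxV (pdxV U) y t i :=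
      funext fun y => hW2 y t i
    have H := (((hasDerivAt_pdxV hU3 x t i).add
      ((HasDerivAt.const_mul (2:ℝ) (hasDerivAt_pdx hu2 x t)).mul
        (hasDerivAt_pdxV hU0 x t i))).add
      ((HasDerivAt.const_mul (4:ℝ) (hasDerivAt_pdx hu1 x t)).mul
        (hasDerivAt_pdxV hU1 x t i))).add
      ((HasDerivAt.const_mul (2:ℝ) (hasDerivAt_pdx hu x t)).mul (hasDerivAt_pdxV hU2 x t i))
    show deriv (fun y => pdxV (pdxV W) y t i) x = _
    rw [hfun]
    refine H.deriv.trans ?_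
    ring
  -- ⟨W, W_x⟩ in terms of U
  have hipW : ∀ x t, ip W (pdxV W) x t
      = ip (pdxV U) (pdxV (pdxV U)) x t + 2 * pdx u x t * ip U (pdxV U) x t
      + 2 * u x t * ip (pdxV U) (pdxV U) x t + 2 * u x t * ip U (pdxV (pdxV U)) x t
      + 4 * u x t * pdx u x t * ip U U x t + 4 * u x t ^ 2 * ip U (pdxV U) x t := by
    intro x t
    have key : ∀ i : Fin N, W x t i * pdxV W x t i
        = (pdxV U x t i * pdxV (pdxV U) x t i)
        + (2 * pdx u x t + 4 * u x t ^ 2) * (U x t i * pdxV U x t i)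
        + 2 * u x t * (pdxV U x t i * pdxV U x t i)
        + 2 * u x t * (U x t i * pdxV (pdxV U) x t i)
        + 4 * u x t * pdx u x t * (U x t i * U x t i) := by
      intro i; rw [hW x t i, hW1 x t i]; ring
    calc ip W (pdxV W) x t = ∑ i, W x t i * pdxV W x t i := rfl
      _ = ∑ i, ((pdxV U x t i * pdxV (pdxV U) x t i)
          + (2 * pdx u x t + 4 * u x t ^ 2) * (U x t i * pdxV U x t i)
          + 2 * u x t * (pdxV U x t i * pdxV U x t i)
          + 2 * u x t * (U x t i * pdxV (pdxV U) x t i)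
          + 4 * u x t * pdx u x t * (U x t i * U x t i)) :=
        Finset.sum_congr rfl fun i _ => key i
      _ = _ := by
        simp only [ip, Finset.sum_add_distrib, ← Finset.mul_sum]; ring
  -- x-derivative of the U-evolution equation, componentwise
  have hUtx : ∀ x t i, pdx (fun a b => pdtV U a b i) x t
      = -2 * pdxV (pdxV (pdxV (pdxV U))) x t i
      - 6 * pdx (pdx (pdx u)) x t * U x t i - 12 * pdx (pdx u) x t * pdxV U x t i
      - 6 * pdx u x t * pdxV (pdxV U) x t i
      + 12 * pdx u x t ^ 2 * U x t i + 12 * u x t * pdx (pdx u) x t * U x t i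
      + 24 * u x t * pdx u x t * pdxV U x t i + 6 * u x t ^ 2 * pdxV (pdxV U) x t i
      + ip U U x t * pdxV (pdxV U) x t i
      - 2 * ip (pdxV U) (pdxV U) x t * U x t i
      - 2 * ip U (pdxV (pdxV U)) x t * U x t i := by
    intro x t i
    have hfun : (fun y => pdtV U y t i)
        = fun y => -2 * pdxV (pdxV (pdxV U)) y t i
          - 6 * pdx (pdx u) y t * U y t i - 6 * pdx u y t * pdxV U y t i
          + 12 * u y t * pdx u y t * U y t i + 6 * (u y t) ^ 2 * pdxV U y t i
          + ip U U y t * pdxV U y t i - 2 * ip U (pdxV U) y t * U y t i :=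
      funext fun y => heq2 y t i
    have H := ((((((HasDerivAt.const_mul (-2:ℝ) (hasDerivAt_pdxV hU3 x t i)).sub
      ((HasDerivAt.const_mul (6:ℝ) (hasDerivAt_pdx hu2 x t)).mul
        (hasDerivAt_pdxV hU0 x t i))).sub
      ((HasDerivAt.const_mul (6:ℝ) (hasDerivAt_pdx hu1 x t)).mul
        (hasDerivAt_pdxV hU1 x t i))).add
      (((HasDerivAt.const_mul (12:ℝ) (hasDerivAt_pdx hu x t)).mul
        (hasDerivAt_pdx hu1 x t)).mul (hasDerivAt_pdxV hU0 x t i))).add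
      ((HasDerivAt.const_mul (6:ℝ) (hsq_x x t)).mul (hasDerivAt_pdxV hU1 x t i))).add
      ((hasDerivAt_ip_x hU0 hU0 x t).mul (hasDerivAt_pdxV hU1 x t i))).sub
      ((HasDerivAt.const_mul (2:ℝ) (hasDerivAt_ip_x hU0 hU1 x t)).mul
        (hasDerivAt_pdxV hU0 x t i))
    show deriv (fun y => pdtV U y t i) x = _
    rw [hfun]
    refine H.deriv.trans ?_
    rw [ip_comm (pdxV U) U]; simp only [Pi.mul_apply]; ring
  -- time derivative of W
  have hWt : ∀ x t i, pdtV W x t i = -2 * pdxV (pdxV (pdxV (pdxV U))) x t i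
      - 4 * u x t * pdxV (pdxV (pdxV U)) x t i
      + (-6 * pdx u x t + 6 * u x t ^ 2 + ip U U x t) * pdxV (pdxV U) x t i
      + (-12 * pdx (pdx u) x t + 12 * u x t * pdx u x t + 12 * u x t ^ 3
          + 2 * u x t * ip U U x t) * pdxV U x t i
      + (-4 * pdx (pdx (pdx u)) x t + 12 * pdx u x t ^ 2 + 12 * u x t ^ 2 * pdx u x t
          + 2 * pdx u x t * ip U U x t) * U x t i := by
    intro x t i
    have hfun : (fun s => W x s i) = fun s => pdxV U x s i + 2 * u x s * U x s i :=
      funext fun s => hW x s i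
    have H := (hasDerivAt_pdtV hU1 x t i).add
      ((HasDerivAt.const_mul (2:ℝ) (hasDerivAt_pdt hu x t)).mul (hasDerivAt_pdtV hU0 x t i))
    show deriv (fun s => W x s i) t = _
    rw [hfun]
    refine H.deriv.trans ?_
    rw [clairautV hU0 x t i, hUtx x t i, heq1 x t, heq2 x t i]; ring
  refine ⟨?_, ?_⟩
  · intro x t
    rw [hwt x t, hw3 x t, hw x t, hw1 x t, hipW x t]; ring
  · intro x t i
    rw [hWt x t i, hW3 x t i, hW1 x t i, hw x t]; ring
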